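/- Let (E, ρ, [·,·]) be an almost Lie algebroid over A (so ρ([X,Y]) = [ρ(X), ρ(Y)]), with Jacobiator J, and let d denote the algebroid differential on alternating A-multilinear forms. Then: (a) for every f ∈ A (a 0-form), d²f = 0; (b) for every A-linear 1-form ω : E → A and all X, Y, Z ∈ E, (d²ω)(X,Y,Z) = −ω(J(X,Y,Z)). In particular d² vanishes on 1-forms if and only if all 1-forms annihilate the Jacobiator. -/

import Mathlib

/-!
With the anchor a Lie algebra morphism, `ρ([X,Y]) f = ρ(X)ρ(Y) f − ρ(Y)ρ(X) f`, so
`d²f(X,Y) = 0` is exactly this identity. For a 1-form `ω`, expanding `d²ω(X,Y,Z)` gives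
second-order anchor terms that cancel for the same reason, and, after using skew-symmetry to put
the brackets in cyclic order, the three remaining terms add up to `−ω(J(X,Y,Z))`.
-/

noncomputable section

set_option maxHeartbeats 1000000
set_option synthInstance.maxHeartbeats 400000

/-- The differential of a `0`-form `f ∈ A`: `df(X) = ρ(X)(f)`. -/
def d0 {A : Type*} [CommRing A] [Algebra ℝ A] {E : Type*} [AddCommGroup E] [Module A E]
    (ρ : E →ₗ[A] Derivation ℝ A A) (f : A) : E → A :=
  fun X => ρ X f

/-- The differential of a `1`-form. -/
def d1 {A : Type*} [CommRing A] [Algebra ℝ A] {E : Type*} [AddCommGroup E] [Module A E]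
    (ρ : E →ₗ[A] Derivation ℝ A A) (br : E → E → E) (ω : E → A) : E → E → A :=
  fun X Y => ρ X (ω Y) - ρ Y (ω X) - ω (br X Y)

/-- The differential of a `2`-form. -/
def d2 {A : Type*} [CommRing A] [Algebra ℝ A] {E : Type*} [AddCommGroup E] [Module A E]
    (ρ : E →ₗ[A] Derivation ℝ A A) (br : E → E → E) (η : E → E → A) : E → E → E → A :=
  fun X Y Z => ρ X (η Y Z) - ρ Y (η X Z) + ρ Z (η X Y)
    - η (br X Y) Z + η (br X Z) Y - η (br Y Z) X

def jacobiator {E : Type*} [Add E] (br : E → E → E) (X Y Z : E) : E :=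
  br X (br Y Z) + br Y (br Z X) + br Z (br X Y)

section AlmostLieAlgebroid

variable {A : Type*} [CommRing A] [Algebra ℝ A] {E : Type*} [AddCommGroup E] [Module A E]
  {ρ : E →ₗ[A] Derivation ℝ A A} {br : E → E → E}

theorem anchor_bracket_apply (br_anchor : ∀ X Y : E, ρ (br X Y) = ⁅ρ X, ρ Y⁆)
    (X Y : E) (f : A) : ρ (br X Y) f = ρ X (ρ Y f) - ρ Y (ρ X f) := by
  rw [br_anchor, Derivation.commutator_apply]

theorem d1_d0_eq_zero (br_anchor : ∀ X Y : E, ρ (br X Y) = ⁅ρ X, ρ Y⁆) (f : A) (X Y : E) :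
    d1 ρ br (d0 ρ f) X Y = 0 := by
  simp only [d1, d0, anchor_bracket_apply br_anchor, sub_self]

theorem d2_d1_eq_neg_jacobiator (br_anchor : ∀ X Y : E, ρ (br X Y) = ⁅ρ X, ρ Y⁆)
    (br_skew : ∀ X Y : E, br Y X = - br X Y)
    (br_addr : ∀ X Y Y' : E, br X (Y + Y') = br X Y + br X Y')
    (ω : E →+ A) (X Y Z : E) :
    d2 ρ br (d1 ρ br ω) X Y Z = - ω (jacobiator br X Y Z) := by
  have br_neg_right (X Y : E) : br X (-Y) = - br X Y :=
    (AddMonoidHom.mk' (br X) (br_addr X)).map_neg Y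
  have cyclic : br Y (br X Z) = - br Y (br Z X) := by
    rw [br_skew X Z, br_neg_right, neg_neg]
  simp only [d2, d1, jacobiator, map_sub, map_add, map_neg, anchor_bracket_apply br_anchor,
    br_skew Z (br X Y), br_skew Y (br X Z), br_skew X (br Y Z), cyclic]
  abel

end AlmostLieAlgebroid

theorem statement17_general
    {A : Type*} [CommRing A] [Algebra ℝ A]
    {E : Type*} [AddCommGroup E] [Module A E]
    (ρ : E →ₗ[A] Derivation ℝ A A) (br : E → E → E)
    (br_addr : ∀ X Y Y' : E, br X (Y + Y') = br X Y + br X Y')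
    (br_skew : ∀ X Y : E, br Y X = - br X Y)
    (br_anchor : ∀ X Y : E, ρ (br X Y) = ⁅ρ X, ρ Y⁆) :
    (∀ (f : A) (X Y : E), d1 ρ br (d0 ρ f) X Y = 0) ∧
    (∀ (ω : E →ₗ[A] A) (X Y Z : E),
      d2 ρ br (d1 ρ br ω) X Y Z = - ω (br X (br Y Z) + br Y (br Z X) + br Z (br X Y))) ∧
    ((∀ (ω : E →ₗ[A] A) (X Y Z : E), d2 ρ br (d1 ρ br ω) X Y Z = 0) ↔
      (∀ (ω : E →ₗ[A] A) (X Y Z : E),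
        ω (br X (br Y Z) + br Y (br Z X) + br Z (br X Y)) = 0)) := by
  have d2_d1_linear (ω : E →ₗ[A] A) (X Y Z : E) :
      d2 ρ br (d1 ρ br ω) X Y Z = - ω (jacobiator br X Y Z) :=
    d2_d1_eq_neg_jacobiator br_anchor br_skew br_addr ω.toAddMonoidHom X Y Z
  refine ⟨d1_d0_eq_zero br_anchor, d2_d1_linear, ?_⟩
  simp only [d2_d1_linear, neg_eq_zero]
  rfl

/-- For an almost Lie algebroid `(E, ρ, br)` over a commutative ℝ-algebra
`A`, with Jacobiator `J`: (a) `d²f = 0` for every `0`-form `f ∈ A`; (b) for every `A`-linear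
`1`-form `ω` one has `(d²ω)(X,Y,Z) = −ω(J(X,Y,Z))`; in particular `d²` vanishes on `1`-forms
iff all `1`-forms annihilate the Jacobiator. -/
theorem statement17
    {A : Type*} [CommRing A] [Algebra ℝ A]
    {E : Type*} [AddCommGroup E] [Module A E] [Module ℝ E] [IsScalarTower ℝ A E]
    (ρ : E →ₗ[A] Derivation ℝ A A) (br : E → E → E)
    (br_addl : ∀ X X' Y : E, br (X + X') Y = br X Y + br X' Y)
    (br_addr : ∀ X Y Y' : E, br X (Y + Y') = br X Y + br X Y')
    (br_smull : ∀ (c : ℝ) (X Y : E), br (c • X) Y = c • br X Y)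
    (br_smulr : ∀ (c : ℝ) (X Y : E), br X (c • Y) = c • br X Y)
    (br_skew : ∀ X Y : E, br Y X = - br X Y)
    (br_leib : ∀ (f : A) (X Y : E), br X (f • Y) = ρ X f • Y + f • br X Y)
    (br_anchor : ∀ X Y : E, ρ (br X Y) = ⁅ρ X, ρ Y⁆) :
    (∀ (f : A) (X Y : E), d1 ρ br (d0 ρ f) X Y = 0) ∧
    (∀ (ω : E →ₗ[A] A) (X Y Z : E),
      d2 ρ br (d1 ρ br ω) X Y Z = - ω (br X (br Y Z) + br Y (br Z X) + br Z (br X Y))) ∧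
    ((∀ (ω : E →ₗ[A] A) (X Y Z : E), d2 ρ br (d1 ρ br ω) X Y Z = 0) ↔
      (∀ (ω : E →ₗ[A] A) (X Y Z : E),
        ω (br X (br Y Z) + br Y (br Z X) + br Z (br X Y)) = 0)) :=
  statement17_general ρ br br_addr br_skew br_anchor
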